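/- arXiv:2107.14067 — 5 statements merged into one kernel-verified Lean document; each statement's English description precedes it below -/
import Mathlib

section
/- For sets A, K ⊆ ℝⁿ, the Hausdorff dimension of the sumset A + K is at most the Hausdorff dimension of A plus the upper box-counting (Minkowski) dimension of K. -/
open Filter Metric Set ENNReal

/-- Smallest number of `ε`-balls needed to cover `s` (`⊤` if no finite cover exists). -/
noncomputable def coverNum {X : Type*} [PseudoMetricSpace X] (s : Set X) (ε : ℝ) : ℕ∞ :=
  sInf {m : ℕ∞ | ∃ t : Finset X, (t.card : ℕ∞) = m ∧ s ⊆ ⋃ x ∈ t, Metric.ball x ε}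

/-- Upper box-counting (Minkowski) dimension. -/
noncomputable def upperBoxDim {X : Type*} [PseudoMetricSpace X] (s : Set X) : ℝ≥0∞ :=
  Filter.limsup
    (fun ε : ℝ =>
      if coverNum s ε = ⊤ then (⊤ : ℝ≥0∞)
      else ENNReal.ofReal (Real.log ((coverNum s ε).toNat) / Real.log ε⁻¹))
    (nhdsWithin 0 (Set.Ioi 0))

/-! `A + K` is the image of `A × K` under the Lipschitz map `(a, k) ↦ a + k`, so it suffices to
bound `dimH (A × K)`. Let `dimH A < s` and `upperBoxDim K < t`, so that `μH[s] A = 0` and, for all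
small `ε`, `K` is covered by at most `ε ^ (-t)` balls of radius `ε`. Cover `A` by sets `Uᵢ` of
diameter at most `rᵢ > 0` with `∑ rᵢ ^ s` small; the products `Uᵢ × B(y, rᵢ)`, `y` running over
centres of such a cover of `K` at scale `rᵢ`, cover `A × K` and
`∑ diam ^ (s + t) ≤ ∑ rᵢ ^ (-t) * (2 rᵢ) ^ (s + t) = 2 ^ (s + t) * ∑ rᵢ ^ s`.
Hence `μH[s + t] (A × K) = 0`. -/

open Topology MeasureTheory
open scoped NNReal

section BoxCounting

variable {Y : Type*} [PseudoMetricSpace Y]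

theorem exists_finset_cover_card_eq_coverNum {K : Set Y} {ε : ℝ} (h : coverNum K ε ≠ ⊤) :
    ∃ T : Finset Y, (T.card : ℕ∞) = coverNum K ε ∧ K ⊆ ⋃ y ∈ T, ball y ε := by
  refine csInf_mem (s := {m : ℕ∞ | ∃ T : Finset Y, (T.card : ℕ∞) = m ∧ K ⊆ ⋃ y ∈ T, ball y ε})
    ((eq_empty_or_nonempty _).resolve_left fun hempty => h ?_)
  rw [coverNum, hempty, sInf_empty]

theorem natCast_le_rpow_neg_of_log_div_lt {N : ℕ} {ε t : ℝ} (hε0 : 0 < ε) (hε1 : ε < 1)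
    (h : Real.log N / Real.log ε⁻¹ < t) : (N : ℝ) ≤ ε ^ (-t) := by
  have hlog : 0 < Real.log ε⁻¹ := Real.log_pos ((one_lt_inv₀ hε0).2 hε1)
  rw [Real.rpow_neg hε0.le, ← Real.inv_rpow hε0.le]
  exact (Real.lt_rpow_of_log_lt (inv_pos.2 hε0) ((div_lt_iff₀ hlog).1 h)).le

theorem eventually_exists_finset_cover_card_le {K : Set Y} {t : ℝ}
    (hK : upperBoxDim K < ENNReal.ofReal t) :
    ∀ᶠ ε in 𝓝[>] 0, ∃ T : Finset Y,
      K ⊆ ⋃ y ∈ T, ball y ε ∧ (T.card : ℝ≥0∞) ≤ ENNReal.ofReal ε ^ (-t) := by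
  filter_upwards [eventually_lt_of_limsup_lt hK, Ioo_mem_nhdsGT one_pos] with ε hlt ⟨hε0, hε1⟩
  have hfin : coverNum K ε ≠ ⊤ := fun h => by simp [h] at hlt
  obtain ⟨T, hcard, hcover⟩ := exists_finset_cover_card_eq_coverNum hfin
  rw [if_neg hfin, ← hcard, ENat.toNat_natCast, ENNReal.ofReal_lt_ofReal_iff'] at hlt
  refine ⟨T, hcover, ?_⟩
  rw [ENNReal.ofReal_rpow_of_pos hε0, ← ENNReal.ofReal_natCast]
  exact ENNReal.ofReal_le_ofReal (natCast_le_rpow_neg_of_log_div_lt hε0 hε1 hlt.1)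

end BoxCounting

section HausdorffCover

variable {X : Type*} [EMetricSpace X] [MeasurableSpace X] [BorelSpace X]

theorem exists_cover_tsum_ediam_rpow_lt_of_hausdorffMeasure_eq_zero {s : ℝ} (hs : 0 < s)
    {A : Set X} (hA : μH[s] A = 0) {c : ℝ≥0∞} (hc : c ≠ 0) :
    ∃ U : ℕ → Set X, A ⊆ ⋃ i, U i ∧ (∀ i, ediam (U i) ≤ c) ∧ ∑' i, ediam (U i) ^ s < c := by
  rw [Measure.hausdorffMeasure_apply, ENNReal.iSup_eq_zero] at hA
  have hinf := (iSup_pos (pos_iff_ne_zero.2 hc)).symm.trans (hA c) ▸ pos_iff_ne_zero.2 hc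
  simp only [iInf_lt_iff] at hinf
  obtain ⟨U, hUA, hUc, hUsum⟩ := hinf
  refine ⟨U, hUA, hUc, (ENNReal.tsum_le_tsum fun i => ?_).trans_lt hUsum⟩
  rcases (U i).eq_empty_or_nonempty with hU | hU
  · simp [hU, ENNReal.zero_rpow_of_pos hs]
  · exact (iSup_pos (f := fun _ => ediam (U i) ^ s) hU).ge

theorem exists_cover_pos_radius_of_hausdorffMeasure_eq_zero {s : ℝ} (hs : 0 < s) {A : Set X}
    (hA : μH[s] A = 0) {c : ℝ≥0∞} (hc : c ≠ 0) :
    ∃ (U : ℕ → Set X) (r : ℕ → ℝ≥0∞), A ⊆ ⋃ i, U i ∧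
      (∀ i, 0 < r i ∧ r i ≤ c ∧ ediam (U i) ≤ r i) ∧ ∑' i, r i ^ s ≤ c := by
  obtain ⟨U, hUA, hUc, hUsum⟩ :=
    exists_cover_tsum_ediam_rpow_lt_of_hausdorffMeasure_eq_zero hs hA (ENNReal.half_pos hc).ne'
  -- Padding the diameters by `η i ^ s⁻¹` makes the radii positive at a total cost `< c / 2`.
  obtain ⟨η, hη0, hηsum⟩ := ENNReal.exists_pos_sum_of_countable (ENNReal.half_pos hc).ne' ℕ
  set r : ℕ → ℝ≥0∞ := fun i => max (ediam (U i)) (min c ((η i : ℝ≥0∞) ^ s⁻¹))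
  have hr_rpow : ∀ i, r i ^ s ≤ ediam (U i) ^ s + η i := fun i => by
    rw [ENNReal.max_rpow hs.le]
    refine max_le le_self_add ?_
    calc min c ((η i : ℝ≥0∞) ^ s⁻¹) ^ s ≤ ((η i : ℝ≥0∞) ^ s⁻¹) ^ s :=
          ENNReal.rpow_le_rpow (min_le_right _ _) hs.le
      _ = η i := ENNReal.rpow_inv_rpow hs.ne' _
      _ ≤ _ := le_add_self
  refine ⟨U, r, hUA, fun i => ⟨?_, max_le ((hUc i).trans ENNReal.half_le_self) (min_le_left _ _),
    le_max_left _ _⟩, ?_⟩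
  · exact lt_max_of_lt_right (lt_min (pos_iff_ne_zero.2 hc)
      (ENNReal.rpow_pos (ENNReal.coe_pos.2 (hη0 i)) ENNReal.coe_ne_top))
  calc ∑' i, r i ^ s ≤ ∑' i, (ediam (U i) ^ s + η i) := ENNReal.tsum_le_tsum hr_rpow
    _ = ∑' i, ediam (U i) ^ s + ∑' i, (η i : ℝ≥0∞) := ENNReal.tsum_add
    _ ≤ c / 2 + c / 2 := add_le_add hUsum.le hηsum.le
    _ = c := ENNReal.add_halves c

theorem hausdorffMeasure_eq_zero_of_forall_exists_cover {S : Set X} {d : ℝ} {C c₀ : ℝ≥0∞}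
    (hC : C ≠ ⊤) (hc₀ : 0 < c₀)
    (h : ∀ c, 0 < c → c < c₀ → ∃ (ι : Type*) (_ : Countable ι) (V : ι → Set X),
      S ⊆ ⋃ i, V i ∧ (∀ i, ediam (V i) ≤ c) ∧ ∑' i, ediam (V i) ^ d ≤ C * c) :
    μH[d] S = 0 := by
  obtain ⟨u, -, hu, hu_lim⟩ := exists_seq_strictAnti_tendsto' hc₀
  choose ι hι V hSV hVdiam hVsum using fun k => h (u k) (hu k).1 (hu k).2
  refine le_antisymm ?_ zero_le
  calc μH[d] S ≤ liminf (fun k => ∑' i, ediam (V k i) ^ d) atTop :=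
        Measure.hausdorffMeasure_le_liminf_tsum d S u hu_lim V (.of_forall hVdiam) (.of_forall hSV)
    _ ≤ liminf (fun k => C * u k) atTop := liminf_le_liminf (.of_forall hVsum)
    _ = 0 := by simpa using (ENNReal.Tendsto.const_mul hu_lim (Or.inr hC)).liminf_eq

end HausdorffCover

theorem prod_subset_iUnion_prod_ball {X Y : Type*} [PseudoMetricSpace Y] {A : Set X} {K : Set Y}
    {U : ℕ → Set X} {T : ℕ → Finset Y} {ρ : ℕ → ℝ} (hA : A ⊆ ⋃ i, U i)
    (hK : ∀ i, K ⊆ ⋃ y ∈ T i, ball y (ρ i)) :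
    A ×ˢ K ⊆ ⋃ p : Σ i, T i, U p.1 ×ˢ ball (p.2 : Y) (ρ p.1) := by
  rintro ⟨a, b⟩ ⟨ha, hb⟩
  obtain ⟨i, hi⟩ := mem_iUnion.1 (hA ha)
  obtain ⟨y, hy, hby⟩ := mem_iUnion₂.1 (hK i hb)
  exact mem_iUnion.2 ⟨⟨i, y, hy⟩, hi, hby⟩

section Product

variable {X Y : Type*} [EMetricSpace X] [MetricSpace Y]

theorem ediam_prod_le (U : Set X) (V : Set Y) : ediam (U ×ˢ V) ≤ max (ediam U) (ediam V) :=
  ediam_le fun _ hp _ hq => (Prod.edist_eq _ _).trans_le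
    (max_le_max (edist_le_ediam_of_mem hp.1 hq.1) (edist_le_ediam_of_mem hp.2 hq.2))

theorem ediam_prod_ball_le {U : Set X} {r : ℝ≥0∞} (hr : r ≠ ⊤) (hU : ediam U ≤ r) (y : Y) :
    ediam (U ×ˢ ball y r.toReal) ≤ 2 * r := by
  refine (ediam_prod_le _ _).trans (max_le (hU.trans ?_) ?_)
  · exact le_mul_of_one_le_left' one_le_two
  · rw [← eball_ofReal, ENNReal.ofReal_toReal hr]
    exact ediam_eball_le

theorem tsum_ediam_prod_ball_rpow_le {U : Set X} {T : Finset Y} {r : ℝ≥0∞} {s t : ℝ}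
    (hr0 : r ≠ 0) (hr : r ≠ ⊤) (hU : ediam U ≤ r) (hT : (T.card : ℝ≥0∞) ≤ r ^ (-t))
    (hst : 0 ≤ s + t) :
    ∑' y : T, ediam (U ×ˢ ball (y : Y) r.toReal) ^ (s + t) ≤ 2 ^ (s + t) * r ^ s :=
  calc ∑' y : T, ediam (U ×ˢ ball (y : Y) r.toReal) ^ (s + t)
      ≤ ∑' _ : T, (2 * r) ^ (s + t) :=
        ENNReal.tsum_le_tsum fun y => ENNReal.rpow_le_rpow (ediam_prod_ball_le hr hU (y : Y)) hst
    _ = T.card * (2 * r) ^ (s + t) := by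
        rw [tsum_fintype, Finset.sum_const, Finset.card_univ, Fintype.card_coe, nsmul_eq_mul]
    _ ≤ r ^ (-t) * (2 * r) ^ (s + t) := by gcongr
    _ = 2 ^ (s + t) * r ^ s := by
        rw [ENNReal.mul_rpow_of_ne_top ENNReal.ofNat_ne_top hr, mul_left_comm,
          ← ENNReal.rpow_add _ _ hr0 hr, neg_add_eq_sub, add_sub_cancel_right]

variable [MeasurableSpace X] [BorelSpace X] [MeasurableSpace (X × Y)] [BorelSpace (X × Y)]

theorem hausdorffMeasure_prod_eq_zero {A : Set X} {K : Set Y} {s t : ℝ} (hs : 0 < s)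
    (hA : μH[s] A = 0) (hK : upperBoxDim K < ENNReal.ofReal t) : μH[s + t] (A ×ˢ K) = 0 := by
  have hst : 0 ≤ s + t := (add_pos hs (ENNReal.ofReal_pos.1 (zero_le.trans_lt hK))).le
  obtain ⟨ε₀, hε₀, hKcover⟩ :=
    mem_nhdsGT_iff_exists_Ioo_subset.1 (eventually_exists_finset_cover_card_le hK)
  refine hausdorffMeasure_eq_zero_of_forall_exists_cover (C := 2 ^ (s + t))
    (ENNReal.rpow_ne_top_of_nonneg hst ENNReal.ofNat_ne_top)
    (ENNReal.ofReal_pos.2 hε₀) fun c hc0 hc => ?_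
  obtain ⟨U, r, hUA, hr, hrsum⟩ :=
    exists_cover_pos_radius_of_hausdorffMeasure_eq_zero hs hA (ENNReal.half_pos hc0.ne').ne'
  have hr_lt : ∀ i, r i < ENNReal.ofReal ε₀ := fun i =>
    ((hr i).2.1.trans ENNReal.half_le_self).trans_lt hc
  have hr_top : ∀ i, r i ≠ ⊤ := fun i => ((hr_lt i).trans ENNReal.ofReal_lt_top).ne
  have hr_mem : ∀ i, (r i).toReal ∈ Ioo 0 ε₀ := fun i =>
    ⟨ENNReal.toReal_pos (hr i).1.ne' (hr_top i), ENNReal.toReal_lt_of_lt_ofReal (hr_lt i)⟩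
  choose T hTK hTcard using fun i => hKcover (hr_mem i)
  refine ⟨Σ i, T i, inferInstance, fun p => U p.1 ×ˢ ball (p.2 : Y) (r p.1).toReal,
    prod_subset_iUnion_prod_ball hUA hTK, fun p => ?_, ?_⟩
  · calc ediam (U p.1 ×ˢ ball (p.2 : Y) (r p.1).toReal) ≤ 2 * r p.1 :=
          ediam_prod_ball_le (hr_top p.1) (hr p.1).2.2 _
      _ ≤ 2 * (c / 2) := by gcongr; exact (hr p.1).2.1
      _ = c := ENNReal.mul_div_cancel two_ne_zero ENNReal.ofNat_ne_top
  rw [ENNReal.tsum_sigma']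
  calc ∑' i, ∑' y : T i, ediam (U i ×ˢ ball (y : Y) (r i).toReal) ^ (s + t)
      ≤ ∑' i, 2 ^ (s + t) * r i ^ s := ENNReal.tsum_le_tsum fun i =>
        tsum_ediam_prod_ball_rpow_le (hr i).1.ne' (hr_top i) (hr i).2.2
          (by rw [← ENNReal.ofReal_toReal (hr_top i)]; exact hTcard i) hst
    _ = 2 ^ (s + t) * ∑' i, r i ^ s := ENNReal.tsum_mul_left
    _ ≤ 2 ^ (s + t) * c := by gcongr; exact hrsum.trans ENNReal.half_le_self

end Product

theorem dimH_prod_le_dimH_add_upperBoxDim {X Y : Type*} [EMetricSpace X] [MetricSpace Y]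
    (A : Set X) (K : Set Y) : dimH (A ×ˢ K) ≤ dimH A + upperBoxDim K := by
  borelize X
  borelize (X × Y)
  refine dimH_le fun d hd => le_of_not_gt fun hlt => ?_
  obtain ⟨s, hs, t, ht, hst⟩ := ENNReal.exists_add_lt_of_add_lt hlt
  lift s to ℝ≥0 using (le_self_add.trans_lt (hst.trans ENNReal.coe_lt_top)).ne
  lift t to ℝ≥0 using (le_add_self.trans_lt (hst.trans ENNReal.coe_lt_top)).ne
  have hzero : μH[s + t] (A ×ˢ K) = 0 :=
    hausdorffMeasure_prod_eq_zero (NNReal.coe_pos.2 (ENNReal.coe_pos.1 (pos_of_gt hs)))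
      (hausdorffMeasure_of_dimH_lt hs) (by rwa [ENNReal.ofReal_coe_nnreal])
  have hle : (s + t : ℝ) ≤ d := by exact_mod_cast hst.le
  have hmono := Measure.hausdorffMeasure_mono hle (A ×ˢ K)
  rw [hd, hzero] at hmono
  exact ENNReal.top_ne_zero (nonpos_iff_eq_zero.1 hmono)

open scoped Pointwise in
theorem dimH_sumset_le (n : ℕ) (A K : Set (EuclideanSpace ℝ (Fin n))) :
    dimH (A + K) ≤ dimH A + upperBoxDim K := by
  rw [← image2_add, ← image_prod]
  exact ((LipschitzWith.prod_fst.add LipschitzWith.prod_snd).dimH_image_le _).trans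
    (dimH_prod_le_dimH_add_upperBoxDim A K)
end

section
/- Let A, K ⊆ ℝⁿ with dim̄_B(K) + dim_H(A) < n. Then for every ε > 0, for almost all ξ ∈ ℝⁿ with |ξ| < ε, the translate ξ + K is disjoint from A. -/
open Filter Metric Set ENNReal

/-! For `ξ` in `A - K` the translate `ξ + K` meets `A`, and conversely. Pick `s` with
`dim_H A < s < n - dim̄_B K`. Covering `K` by at most `d ^ (s - n)` balls of radius `d` shows
`μ (U - K) ≤ C * (diam U) ^ s` for all small sets `U`, so the outer measure `U ↦ μ (U - K)` is
dominated by `C • μH[s]`, which vanishes on `A`. -/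
open scoped NNReal Topology Pointwise
open MeasureTheory Measure Module

lemma exists_finset_card_eq_coverNum {X : Type*} [PseudoMetricSpace X] {s : Set X} {ε : ℝ}
    (h : coverNum s ε ≠ ⊤) :
    ∃ F : Finset X, (F.card : ℕ∞) = coverNum s ε ∧ s ⊆ ⋃ x ∈ F, ball x ε := by
  unfold coverNum at h ⊢
  exact csInf_mem (s := {m : ℕ∞ | ∃ t : Finset X, (t.card : ℕ∞) = m ∧ s ⊆ ⋃ x ∈ t, ball x ε})
    (nonempty_iff_ne_empty.2 fun hempty => h (by rw [hempty, sInf_empty]))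

lemma natCast_le_rpow_neg_of_log_div_log_inv_lt {m : ℕ} {d t : ℝ} (hd0 : 0 < d) (hd1 : d < 1)
    (h : Real.log m / Real.log d⁻¹ < t) : (m : ℝ) ≤ d ^ (-t) := by
  rcases m.eq_zero_or_pos with rfl | hm
  · simpa using (Real.rpow_pos_of_pos hd0 _).le
  have hlog : 0 < Real.log d⁻¹ := Real.log_pos ((one_lt_inv₀ hd0).2 hd1)
  rw [div_lt_iff₀ hlog, ← Real.log_rpow (inv_pos.2 hd0)] at h
  rw [Real.rpow_neg hd0.le, ← Real.inv_rpow hd0.le]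
  exact ((Real.log_lt_log_iff (by positivity) (by positivity)).1 h).le

lemma eventually_exists_finset_card_le_rpow_neg {X : Type*} [PseudoMetricSpace X] {K : Set X}
    {t : ℝ} (h : upperBoxDim K < ENNReal.ofReal t) :
    ∀ᶠ d in 𝓝[>] 0, ∃ F : Finset X, (F.card : ℝ) ≤ d ^ (-t) ∧ K ⊆ ⋃ x ∈ F, ball x d := by
  filter_upwards [eventually_lt_of_limsup_lt h, Ioo_mem_nhdsGT (zero_lt_one' ℝ)]
    with d hd ⟨hd0, hd1⟩
  have hfin : coverNum K d ≠ ⊤ := fun htop => by simp [htop] at hd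
  obtain ⟨F, hF, hcov⟩ := exists_finset_card_eq_coverNum hfin
  rw [if_neg hfin, ENNReal.ofReal_lt_ofReal_iff', ← hF, ENat.toNat_natCast] at hd
  exact ⟨F, natCast_le_rpow_neg_of_log_div_log_inv_lt hd0 hd1 hd.1, hcov⟩

def subRightOuterMeasure {E : Type*} [Sub E] [MeasurableSpace E] (μ : Measure E) (K : Set E) :
    OuterMeasure E where
  measureOf U := μ (U - K)
  empty := by simp
  mono h := measure_mono (sub_subset_sub_right h)
  iUnion_nat U _ := by
    simp only [iUnion_sub]
    exact measure_iUnion_le _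

lemma measure_sub_le_card_mul_measure_ball {E : Type*} [NormedAddCommGroup E] [MeasurableSpace E]
    [BorelSpace E] (μ : Measure E) [μ.IsAddHaarMeasure] {U K : Set E} {F : Finset E} {d : ℝ}
    (hd : 0 ≤ d) (hU : ediam U ≤ ENNReal.ofReal d) (hK : K ⊆ ⋃ x ∈ F, ball x d) :
    μ (U - K) ≤ F.card * μ (ball 0 (2 * d)) := by
  rcases U.eq_empty_or_nonempty with rfl | ⟨z, hz⟩
  · simp
  have hsub : U - K ⊆ ⋃ x ∈ F, ball (z - x) (2 * d) := by
    rintro _ ⟨u, hu, k, hk, rfl⟩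
    obtain ⟨x, hxF, hkx⟩ := mem_iUnion₂.1 (hK hk)
    refine mem_iUnion₂.2 ⟨x, hxF, ?_⟩
    have huz : dist u z ≤ d :=
      (edist_le_ofReal hd).1 ((edist_le_ediam_of_mem hu hz).trans hU)
    calc dist (u - k) (z - x) ≤ dist u z + dist k x := dist_sub_sub_le _ _ _ _
      _ < 2 * d := by rw [mem_ball] at hkx; linarith
  calc μ (U - K) ≤ ∑ x ∈ F, μ (ball (z - x) (2 * d)) :=
        (measure_mono hsub).trans (measure_biUnion_finset_le _ _)
    _ = F.card * μ (ball 0 (2 * d)) := by simp [addHaar_ball_center]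

lemma OuterMeasure.le_mul_hausdorffMeasure {X : Type*} [EMetricSpace X] [MeasurableSpace X]
    [BorelSpace X] (ν : OuterMeasure X) {s : ℝ} {r C : ℝ≥0∞} (hr : 0 < r) (hC0 : C ≠ 0)
    (hC : C ≠ ∞) (hbound : ∀ U : Set X, ediam U ≤ r → ν U ≤ C * ediam U ^ s) (A : Set X) :
    ν A ≤ C * μH[s] A := by
  have hle : ν ≤ OuterMeasure.mkMetric fun d => C * d ^ s :=
    OuterMeasure.le_mkMetric _ _ r hr hbound
  have hsmul : (OuterMeasure.mkMetric fun d => C * d ^ s : OuterMeasure X) ≤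
      C • OuterMeasure.mkMetric fun d => d ^ s :=
    OuterMeasure.mkMetric_mono_smul hC hC0 (Eventually.of_forall fun _ => le_rfl)
  have hA := (hle.trans hsmul) A
  rwa [_root_.smul_apply, OuterMeasure.coe_mkMetric, smul_eq_mul] at hA

section FiniteDimensional

variable {E : Type*} [NormedAddCommGroup E] [NormedSpace ℝ E] [FiniteDimensional ℝ E]
  [MeasurableSpace E] [BorelSpace E] (μ : Measure E) [μ.IsAddHaarMeasure]

lemma measure_sub_le_rpow_of_card_le {U K : Set E} {F : Finset E} {d t : ℝ} (hd : 0 < d)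
    (hF : (F.card : ℝ) ≤ d ^ (-t)) (hK : K ⊆ ⋃ x ∈ F, ball x d)
    (hU : ediam U ≤ ENNReal.ofReal d) :
    μ (U - K) ≤ 2 ^ finrank ℝ E * μ (ball 0 1) * ENNReal.ofReal d ^ (finrank ℝ E - t) := by
  have hreal : d ^ (-t) * (2 * d) ^ finrank ℝ E = 2 ^ finrank ℝ E * d ^ (finrank ℝ E - t) := by
    rw [mul_pow, Real.rpow_sub hd, Real.rpow_neg hd.le, Real.rpow_natCast]
    field_simp
  calc μ (U - K) ≤ F.card * μ (ball 0 (2 * d)) :=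
        measure_sub_le_card_mul_measure_ball μ hd.le hU hK
    _ ≤ ENNReal.ofReal (d ^ (-t)) * (ENNReal.ofReal ((2 * d) ^ finrank ℝ E) * μ (ball 0 1)) := by
        rw [addHaar_ball_of_pos μ _ (by positivity)]
        gcongr
        exact (ENNReal.ofReal_natCast _).symm.trans_le (ENNReal.ofReal_le_ofReal hF)
    _ = 2 ^ finrank ℝ E * μ (ball 0 1) * ENNReal.ofReal d ^ (finrank ℝ E - t) := by
        rw [← mul_assoc, ← ENNReal.ofReal_mul (by positivity), hreal,
          ENNReal.ofReal_mul (by positivity), ENNReal.ofReal_rpow_of_pos hd,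
          ENNReal.ofReal_pow zero_le_two, ENNReal.ofReal_ofNat]
        ring

lemma exists_measure_sub_le_mul_ediam_rpow {K : Set E} {t : ℝ}
    (hK : upperBoxDim K < ENNReal.ofReal t) :
    ∃ r > 0, ∃ C ≠ 0, C ≠ ∞ ∧
      ∀ U : Set E, ediam U ≤ r → μ (U - K) ≤ C * ediam U ^ (finrank ℝ E - t) := by
  obtain ⟨δ, hδ, hcover⟩ :=
    mem_nhdsGT_iff_exists_Ioo_subset.1 (eventually_exists_finset_card_le_rpow_neg hK)
  set C : ℝ≥0∞ := 2 ^ finrank ℝ E * μ (ball 0 1)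
  have hC0 : C ≠ 0 := mul_ne_zero (by simp) (measure_ball_pos μ 0 one_pos).ne'
  have hC : C ≠ ∞ := mul_ne_top (by simp) measure_ball_lt_top.ne
  refine ⟨ENNReal.ofReal (δ / 2), by simpa using hδ, C, hC0, hC, fun U hU => ?_⟩
  have hUfin : ediam U ≠ ∞ := ne_top_of_le_ne_top ofReal_ne_top hU
  set a := (ediam U).toReal
  have ha : a < δ := (ENNReal.toReal_le_of_le_ofReal (by linarith [mem_Ioi.1 hδ]) hU).trans_lt
    (by linarith [mem_Ioi.1 hδ])
  rw [← ENNReal.ofReal_toReal hUfin]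
  -- the bound holds at every scale `D ∈ (a, δ)`; let `D ↓ a`
  have hlim : Tendsto (fun D => C * ENNReal.ofReal D ^ (finrank ℝ E - t)) (𝓝[>] a)
      (𝓝 (C * ENNReal.ofReal a ^ (finrank ℝ E - t))) :=
    ENNReal.Tendsto.const_mul ((ENNReal.continuous_rpow_const.comp
      ENNReal.continuous_ofReal).continuousAt.tendsto.mono_left nhdsWithin_le_nhds) (Or.inr hC)
  refine ge_of_tendsto hlim ?_
  filter_upwards [Ioo_mem_nhdsGT ha] with D ⟨haD, hDδ⟩
  have hD : 0 < D := toReal_nonneg.trans_lt haD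
  obtain ⟨F, hF, hKF⟩ := hcover ⟨hD, hDδ⟩
  exact measure_sub_le_rpow_of_card_le μ hD hF hKF
    ((ENNReal.ofReal_toReal hUfin).symm.trans_le (ENNReal.ofReal_le_ofReal haD.le))

theorem addHaar_sub_eq_zero_of_upperBoxDim_add_dimH_lt {A K : Set E}
    (h : upperBoxDim K + dimH A < finrank ℝ E) : μ (A - K) = 0 := by
  obtain ⟨s, hAs, hsK⟩ : ∃ s : ℝ≥0, dimH A < s ∧ (s : ℝ≥0∞) < finrank ℝ E - upperBoxDim K :=
    ENNReal.lt_iff_exists_nnreal_btwn.1 (lt_tsub_iff_left.2 h)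
  have hK : upperBoxDim K < ENNReal.ofReal (finrank ℝ E - s) := by
    rwa [ENNReal.ofReal_sub _ s.coe_nonneg, ENNReal.ofReal_natCast, ENNReal.ofReal_coe_nnreal,
      lt_tsub_comm]
  obtain ⟨r, hr, C, hC0, hC, hbound⟩ := exists_measure_sub_le_mul_ediam_rpow μ hK
  rw [_root_.sub_sub_cancel] at hbound
  refine le_antisymm ?_ zero_le
  calc μ (A - K) = subRightOuterMeasure μ K A := rfl
    _ ≤ C * μH[s] A := OuterMeasure.le_mul_hausdorffMeasure _ hr hC0 hC hbound A
    _ = 0 := by rw [hausdorffMeasure_of_dimH_lt hAs, mul_zero]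

end FiniteDimensional

lemma setOf_not_disjoint_vadd_eq_sub {G : Type*} [AddGroup G] (A K : Set G) :
    {ξ : G | ¬ Disjoint (ξ +ᵥ K) A} = A - K := by
  ext ξ
  simp only [mem_ofPred_eq, not_disjoint_iff, mem_vadd_set, vadd_eq_add, Set.mem_sub]
  constructor
  · rintro ⟨_, ⟨k, hk, rfl⟩, ha⟩
    exact ⟨ξ + k, ha, k, hk, add_sub_cancel_right ξ k⟩
  · rintro ⟨a, ha, k, hk, rfl⟩
    exact ⟨a, ⟨k, hk, sub_add_cancel a k⟩, ha⟩

open MeasureTheory Pointwise in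
theorem ae_translate_avoids_of_dim_general (n : ℕ) (A K : Set (EuclideanSpace ℝ (Fin n)))
    (h : upperBoxDim K + dimH A < (n : ℝ≥0∞)) (ε : ℝ) :
    volume {ξ : EuclideanSpace ℝ (Fin n) | ‖ξ‖ < ε ∧ ¬ Disjoint (ξ +ᵥ K) A} = 0 := by
  have hnull : volume (A - K) = 0 :=
    addHaar_sub_eq_zero_of_upperBoxDim_add_dimH_lt volume (by rwa [finrank_euclideanSpace_fin])
  rw [← setOf_not_disjoint_vadd_eq_sub] at hnull
  exact measure_mono_null (fun ξ hξ => hξ.2) hnull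

open MeasureTheory Pointwise in
theorem ae_translate_avoids_of_dim (n : ℕ) (A K : Set (EuclideanSpace ℝ (Fin n)))
    (h : upperBoxDim K + dimH A < (n : ℝ≥0∞)) (ε : ℝ) (hε : 0 < ε) :
    volume {ξ : EuclideanSpace ℝ (Fin n) | ‖ξ‖ < ε ∧ ¬ Disjoint (ξ +ᵥ K) A} = 0 :=
  ae_translate_avoids_of_dim_general n A K h ε
end

section
/- Let K ⊆ ℝⁿ be a compact set with empty interior and let p : ℝⁿ → ℝⁿ be a polynomial mapping (each coordinate function a real polynomial in n variables). Then p(K) is a compact set with empty interior. -/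
/-!
The argument works for any C¹ map `f`. Split `K` into its critical points, where `det (f' x) = 0`, and its regular points. By the easy
half of Sard's theorem the critical points are mapped to a null σ-compact set, hence a meagre
one. Near a regular point `f` is a homeomorphism onto an open set (inverse function theorem), so
it maps compact pieces of `K` with empty interior to closed sets with empty interior; countably
many such pieces cover the regular points. Thus `f '' K` is meagre, and by Baire's theorem it has
empty interior.
-/

open Set Filter Topology Metric MeasureTheory

theorem OpenPartialHomeomorph.interior_image_eq_empty {X Y : Type*} [TopologicalSpace X]
    [TopologicalSpace Y] (e : OpenPartialHomeomorph X Y) {t : Set X} (ht : t ⊆ e.source)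
    (hti : interior t = ∅) : interior (e '' t) = ∅ := by
  have himage : e '' t ⊆ e.target := by
    rintro _ ⟨x, hx, rfl⟩
    exact e.map_source (ht hx)
  have hopen : IsOpen (e.symm '' interior (e '' t)) :=
    e.symm.isOpen_image_of_subset_source isOpen_interior (interior_subset.trans himage)
  have hsub : e.symm '' interior (e '' t) ⊆ t := by
    rintro _ ⟨_, hy, rfl⟩
    obtain ⟨x, hx, rfl⟩ := interior_subset hy
    rwa [e.left_inv (ht hx)]
  refine eq_empty_of_forall_notMem fun y hy => ?_
  simpa [hti] using interior_maximal hsub hopen ⟨y, hy, rfl⟩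

theorem HasStrictFDerivAt.exists_mem_nhds_interior_image_eq_empty {𝕜 E F : Type*}
    [NontriviallyNormedField 𝕜] [NormedAddCommGroup E] [NormedSpace 𝕜 E] [CompleteSpace E]
    [NormedAddCommGroup F] [NormedSpace 𝕜 F] {f : E → F} {f' : E ≃L[𝕜] F} {a : E}
    (hf : HasStrictFDerivAt f (f' : E →L[𝕜] F) a) :
    ∃ U ∈ 𝓝 a, ∀ t ⊆ U, interior t = ∅ → interior (f '' t) = ∅ := by
  set e := hf.toOpenPartialHomeomorph f
  refine ⟨e.source, e.open_source.mem_nhds hf.mem_toOpenPartialHomeomorph_source,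
    fun t ht hti => ?_⟩
  simpa [e] using e.interior_image_eq_empty ht hti

theorem isMeagre_image_of_forall_exists_mem_nhdsWithin {X Y : Type*} [TopologicalSpace X]
    [SecondCountableTopology X] [TopologicalSpace Y] {f : X → Y} {s : Set X}
    (h : ∀ x ∈ s, ∃ U ∈ 𝓝[s] x, IsMeagre (f '' U)) : IsMeagre (f '' s) := by
  choose! U hU hmeagre using h
  obtain ⟨t, hts, htc, hcover⟩ := TopologicalSpace.countable_cover_nhdsWithin hU
  refine (isMeagre_biUnion htc fun x hx => hmeagre x (hts hx)).mono ?_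
  rw [← image_iUnion₂]
  exact image_mono hcover

section FiniteDimensional

variable {E : Type*} [NormedAddCommGroup E] [NormedSpace ℝ E] [FiniteDimensional ℝ E]

theorem isMeagre_image_of_det_fderivWithin_eq_zero {f : E → E} {f' : E → E →L[ℝ] E}
    {s : Set E} (hs : IsSigmaCompact s) (hf' : ∀ x ∈ s, HasFDerivWithinAt f (f' x) s x)
    (hdet : ∀ x ∈ s, (f' x).det = 0) : IsMeagre (f '' s) := by
  borelize E
  have hcont : ContinuousOn f s := fun x hx => (hf' x hx).continuousWithinAt
  exact IsMeagre.of_isSigmaCompact_null (μ := Measure.addHaar) (hs.image_of_continuousOn hcont)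
    (addHaar_image_eq_zero_of_det_fderivWithin_eq_zero _ hf' hdet)

theorem ContDiff.interior_image_eq_empty_of_isClosed {f : E → E} (hf : ContDiff ℝ 1 f)
    {K : Set E} (hK : IsClosed K) (hKi : interior K = ∅) : interior (f '' K) = ∅ := by
  set C := {x | (fderiv ℝ f x).det = 0}
  have hC : IsClosed C :=
    isClosed_eq (ContinuousLinearMap.continuous_det.comp (hf.continuous_fderiv one_ne_zero))
      continuous_const
  have hcrit : IsMeagre (f '' (K ∩ C)) :=
    isMeagre_image_of_det_fderivWithin_eq_zero
      (isSigmaCompact_univ.of_isClosed_subset (hK.inter hC) (subset_univ _))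
      (fun x _ => (hf.differentiable one_ne_zero x).hasFDerivAt.hasFDerivWithinAt)
      fun _ hx => hx.2
  have hreg : IsMeagre (f '' (K \ C)) := by
    refine isMeagre_image_of_forall_exists_mem_nhdsWithin fun x hx => ?_
    have hstrict := hf.contDiffAt.hasStrictFDerivAt' (f' :=
      (fderiv ℝ f x).toContinuousLinearEquivOfDetNeZero hx.2)
      (by simpa using (hf.differentiable one_ne_zero x).hasFDerivAt) one_ne_zero
    obtain ⟨U, hU, hUint⟩ := hstrict.exists_mem_nhds_interior_image_eq_empty
    obtain ⟨r, hr, hrU⟩ := nhds_basis_closedBall.mem_iff.1 hU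
    have hpiece : IsCompact (K ∩ closedBall x r) :=
      (isCompact_closedBall x r).inter_left hK
    have hnd : IsNowhereDense (f '' (K ∩ closedBall x r)) := by
      rw [((hpiece.image hf.continuous).isClosed).isNowhereDense_iff]
      exact hUint _ (inter_subset_right.trans hrU)
        (eq_empty_of_subset_empty (hKi ▸ interior_mono inter_subset_left))
    refine ⟨K \ C ∩ closedBall x r, inter_mem_nhdsWithin _ (closedBall_mem_nhds x hr),
      (hnd.mono (image_mono ?_)).isMeagre⟩
    exact inter_subset_inter_left _ sdiff_subset
  have hmeagre : IsMeagre (f '' K) := by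
    simpa [← image_union, sdiff_union_inter] using hreg.union hcrit
  by_contra hne
  exact not_isMeagre_of_isOpen isOpen_interior (nonempty_iff_ne_empty.2 hne)
    (hmeagre.mono interior_subset)

end FiniteDimensional

theorem MvPolynomial.contDiff_eval_euclidean {ι : Type*} [Fintype ι] {k : WithTop ℕ∞}
    (q : MvPolynomial ι ℝ) :
    ContDiff ℝ k (fun x : EuclideanSpace ℝ ι => MvPolynomial.eval x q) := by
  induction q using MvPolynomial.induction_on with
  | C a => simpa using contDiff_const (c := a)
  | add p q hp hq => simpa using hp.add hq
  | mul_X q i hq =>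
    simpa using hq.mul (PiLp.proj (𝕜 := ℝ) 2 (fun _ : ι => ℝ) i).contDiff

theorem polymap_image_compact_empty_interior (n : ℕ)
    (K : Set (EuclideanSpace ℝ (Fin n))) (hK : IsCompact K) (hKi : interior K = ∅)
    (p : Fin n → MvPolynomial (Fin n) ℝ) :
    IsCompact ((fun x : EuclideanSpace ℝ (Fin n) =>
        (WithLp.toLp 2 (fun i => MvPolynomial.eval x (p i)) : EuclideanSpace ℝ (Fin n))) '' K) ∧
    interior ((fun x : EuclideanSpace ℝ (Fin n) =>
        (WithLp.toLp 2 (fun i => MvPolynomial.eval x (p i)) : EuclideanSpace ℝ (Fin n))) '' K) = ∅ := by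
  have hf : ContDiff ℝ 1 (fun x : EuclideanSpace ℝ (Fin n) =>
      (WithLp.toLp 2 (fun i => MvPolynomial.eval x (p i)) : EuclideanSpace ℝ (Fin n))) :=
    contDiff_euclidean.2 fun i => (p i).contDiff_eval_euclidean
  exact ⟨hK.image hf.continuous, hf.interior_image_eq_empty_of_isClosed hK.isClosed hKi⟩
end

section
/- Let A ⊆ ℝⁿ be countable, K ⊆ ℝⁿ compact with empty interior, and f : K → ℝⁿ continuous. Then for every ε > 0 there exists a polynomial mapping p : ℝⁿ → ℝⁿ such that p(x) ∉ A for all x ∈ K and max_{x ∈ K} ‖f(x) − p(x)‖ < ε. -/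
/-!
Approximate `f` coordinatewise by a polynomial map `P` (Stone–Weierstrass). Since `K` is compact
with empty interior it is meagre, and so is `P '' K`: on the critical set of `P` the image is
Lebesgue-null (Sard's lemma for C¹ maps between spaces of equal dimension) and σ-compact, and
near a regular point `P` is a local homeomorphism, which preserves meagreness. Hence the set of
translations `c` with `(P + c) '' K` meeting the countable set `A` is a countable union of
translates of `-(P '' K)`, still meagre, so by Baire there is an arbitrarily small `c` avoiding it.
-/

open Set Topology MvPolynomial

theorem IsSigmaCompact.inter_right {X : Type*} [TopologicalSpace X] {s t : Set X}
    (hs : IsSigmaCompact s) (ht : IsClosed t) : IsSigmaCompact (s ∩ t) := by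
  obtain ⟨K, hK, rfl⟩ := hs
  rw [iUnion_inter]
  exact isSigmaCompact_iUnion_of_isCompact _ fun n => (hK n).inter_right ht

section Meagre

variable {X Y : Type*} [TopologicalSpace X] [TopologicalSpace Y]

theorem OpenPartialHomeomorph.isMeagre_image_inter_source (e : OpenPartialHomeomorph X Y)
    {t : Set X} (ht : IsMeagre t) : IsMeagre (e '' (t ∩ e.source)) := by
  have hsub : IsMeagre ((↑) ⁻¹' t : Set e.source) :=
    ht.preimage_of_isOpenMap continuous_subtype_val e.open_source.isOpenMap_subtype_val
  convert e.isOpenEmbedding_restrict.isInducing.isMeagre_image hsub using 1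
  ext y
  simp [and_assoc]

theorem IsLocalHomeomorphOn.isMeagre_image_inter [SecondCountableTopology X] {f : X → Y}
    {s t : Set X} (hf : IsLocalHomeomorphOn f s) (ht : IsMeagre t) :
    IsMeagre (f '' (t ∩ s)) := by
  -- `choose!` needs some `OpenPartialHomeomorph X Y` as a default value
  rcases s.eq_empty_or_nonempty with rfl | ⟨x₀, hx₀⟩
  · simpa using IsMeagre.empty
  have : Nonempty (OpenPartialHomeomorph X Y) := ⟨(hf x₀ hx₀).choose⟩
  choose! e hxe hfe using hf
  obtain ⟨T, hTs, hTc, hsT⟩ :=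
    TopologicalSpace.countable_cover_nhdsWithin (f := fun x => (e x).source) fun x hx =>
      mem_nhdsWithin_of_mem_nhds ((e x).open_source.mem_nhds (hxe x hx))
  refine (isMeagre_biUnion hTc fun x _ => (e x).isMeagre_image_inter_source ht).mono ?_
  rintro - ⟨y, ⟨hyt, hys⟩, rfl⟩
  obtain ⟨x, hxT, hyx⟩ := mem_iUnion₂.1 (hsT hys)
  exact mem_iUnion₂.2 ⟨x, hxT, hfe x (hTs hxT) ▸ ⟨y, ⟨hyt, hyx⟩, rfl⟩⟩

theorem exists_mem_forall_add_notMem_of_isMeagre {G : Type*} [TopologicalSpace G] [AddGroup G]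
    [IsTopologicalAddGroup G] [BaireSpace G] {S A U : Set G} (hS : IsMeagre S)
    (hA : A.Countable) (hU : IsOpen U) (hne : U.Nonempty) :
    ∃ c ∈ U, ∀ s ∈ S, s + c ∉ A := by
  have hbad : IsMeagre (⋃ a ∈ A, (fun s => -s + a) '' S) :=
    isMeagre_biUnion hA fun a _ =>
      ((Homeomorph.neg G).trans (Homeomorph.addRight a)).isInducing.isMeagre_image hS
  obtain ⟨c, hc, hcU⟩ := (dense_of_mem_residual hbad).exists_mem_open hU hne
  refine ⟨c, hcU, fun s hs hsc => hc (mem_iUnion₂.2 ⟨_, hsc, s, hs, ?_⟩)⟩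
  simp

end Meagre

section CriticalValues

variable {E : Type*} [NormedAddCommGroup E] [NormedSpace ℝ E] [FiniteDimensional ℝ E]

theorem ContDiff.isLocalHomeomorphOn_det_fderiv_ne_zero {g : E → E} (hg : ContDiff ℝ 1 g) :
    IsLocalHomeomorphOn g {x | (fderiv ℝ g x).det ≠ 0} := by
  intro x hx
  let e : E ≃L[ℝ] E := (LinearMap.equivOfDetNeZero _ hx).toContinuousLinearEquiv
  have hstrict : HasStrictFDerivAt g (e : E →L[ℝ] E) x :=
    hg.contDiffAt.hasStrictFDerivAt one_ne_zero
  exact ⟨hstrict.toOpenPartialHomeomorph g, hstrict.mem_toOpenPartialHomeomorph_source, rfl⟩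

theorem ContDiff.isMeagre_image {g : E → E} (hg : ContDiff ℝ 1 g) {K : Set E}
    (hKσ : IsSigmaCompact K) (hK : IsMeagre K) : IsMeagre (g '' K) := by
  set Z := {x | (fderiv ℝ g x).det = 0}
  have hZ : IsClosed Z :=
    isClosed_eq (ContinuousLinearMap.continuous_det.comp (hg.continuous_fderiv one_ne_zero))
      continuous_const
  have hcrit : IsMeagre (g '' (K ∩ Z)) := by
    borelize E
    have hnull : MeasureTheory.Measure.addHaar (g '' (K ∩ Z)) = 0 :=
      MeasureTheory.addHaar_image_eq_zero_of_det_fderivWithin_eq_zero _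
        (fun x _ => (hg.differentiable one_ne_zero x).hasFDerivAt.hasFDerivWithinAt)
        fun x hx => hx.2
    exact .of_isSigmaCompact_null ((hKσ.inter_right hZ).image hg.continuous) hnull
  have hreg : IsMeagre (g '' (K ∩ Zᶜ)) :=
    hg.isLocalHomeomorphOn_det_fderiv_ne_zero.isMeagre_image_inter hK
  simpa [← image_union, inter_union_compl] using hcrit.union hreg

end CriticalValues

theorem EuclideanSpace.norm_le_sum_norm {ι : Type*} [Fintype ι] (v : EuclideanSpace ℝ ι) :
    ‖v‖ ≤ ∑ i, ‖v i‖ := by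
  rw [EuclideanSpace.norm_eq, Real.sqrt_le_left (Finset.sum_nonneg fun _ _ => norm_nonneg _)]
  exact Finset.sum_sq_le_sq_sum_of_nonneg fun _ _ => norm_nonneg _

namespace MvPolynomial

variable {ι : Type*}

noncomputable def evalEuclidean (p : ι → MvPolynomial ι ℝ) (x : EuclideanSpace ℝ ι) :
    EuclideanSpace ℝ ι :=
  WithLp.toLp 2 fun i => eval x (p i)

theorem evalEuclidean_apply (p : ι → MvPolynomial ι ℝ) (x : EuclideanSpace ℝ ι) (i : ι) :
    evalEuclidean p x i = eval x (p i) := rfl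

theorem evalEuclidean_add_C (p : ι → MvPolynomial ι ℝ) (c x : EuclideanSpace ℝ ι) :
    evalEuclidean (fun i => p i + C (c i)) x = evalEuclidean p x + c := by
  ext i
  simp [evalEuclidean_apply]

variable [Fintype ι]

theorem contDiff_evalEuclidean (p : ι → MvPolynomial ι ℝ) :
    ContDiff ℝ 1 (evalEuclidean p) := by
  have h : ∀ i, ContDiff ℝ 1 fun x : EuclideanSpace ℝ ι => eval x (p i) := fun i =>
    (AnalyticOnNhd.eval_linearMap (WithLp.linearEquiv 2 ℝ (ι → ℝ)).toLinearMap (p i)).contDiff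
  exact (EuclideanSpace.equiv ι ℝ).symm.contDiff.comp (contDiff_pi.2 h)

theorem exists_eval_near_of_continuousOn {K : Set (EuclideanSpace ℝ ι)} (hK : IsCompact K)
    {g : EuclideanSpace ℝ ι → ℝ} (hg : ContinuousOn g K) {δ : ℝ} (hδ : 0 < δ) :
    ∃ q : MvPolynomial ι ℝ, ∀ x ∈ K, |g x - eval x q| < δ := by
  have : CompactSpace K := isCompact_iff_compactSpace.mp hK
  let coord : ι → C(K, ℝ) := fun i => ⟨fun x => (x : EuclideanSpace ℝ ι) i, by fun_prop⟩
  have heval : ∀ q x, aeval coord q x = eval (x : EuclideanSpace ℝ ι) q := fun q x => by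
    simpa [coord] using comp_aeval_apply (f := coord) (ContinuousMap.evalAlgHom ℝ ℝ x) q
  have hsep : (aeval (R := ℝ) coord).range.SeparatesPoints := by
    intro x y hxy
    obtain ⟨i, hi⟩ : ∃ i, (x : EuclideanSpace ℝ ι) i ≠ (y : EuclideanSpace ℝ ι) i := by
      by_contra! h
      exact hxy (Subtype.ext (PiLp.ext h))
    exact ⟨coord i, ⟨_, ⟨X i, rfl⟩, by simp⟩, hi⟩
  obtain ⟨⟨_, q, rfl⟩, hq⟩ :=
    ContinuousMap.exists_mem_subalgebra_near_continuous_of_separatesPoints _ hsep _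
      hg.domRestrict δ hδ
  refine ⟨q, fun x hx => ?_⟩
  simpa [heval, abs_sub_comm] using hq ⟨x, hx⟩

theorem exists_evalEuclidean_near_of_continuousOn {K : Set (EuclideanSpace ℝ ι)}
    (hK : IsCompact K) {f : EuclideanSpace ℝ ι → EuclideanSpace ℝ ι} (hf : ContinuousOn f K)
    {ε : ℝ} (hε : 0 < ε) :
    ∃ p : ι → MvPolynomial ι ℝ, ∀ x ∈ K, ‖f x - evalEuclidean p x‖ < ε := by
  set δ := ε / (Fintype.card ι + 1) with hδ
  choose p hp using fun i => exists_eval_near_of_continuousOn hK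
    ((EuclideanSpace.proj i).continuous.comp_continuousOn hf) (by positivity : 0 < δ)
  refine ⟨p, fun x hx => ?_⟩
  calc ‖f x - evalEuclidean p x‖ ≤ ∑ i, ‖f x i - eval x (p i)‖ :=
        EuclideanSpace.norm_le_sum_norm _
    _ ≤ ∑ _i : ι, δ := Finset.sum_le_sum fun i _ => (hp i x hx).le
    _ = Fintype.card ι * δ := by simp
    _ < ε := by
      rw [hδ, mul_div_assoc', div_lt_iff₀ (by positivity)]
      linarith

end MvPolynomial

theorem weierstrass_avoids_countable (n : ℕ)
    (A : Set (EuclideanSpace ℝ (Fin n))) (hA : A.Countable)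
    (K : Set (EuclideanSpace ℝ (Fin n))) (hK : IsCompact K) (hKi : interior K = ∅)
    (f : EuclideanSpace ℝ (Fin n) → EuclideanSpace ℝ (Fin n)) (hf : ContinuousOn f K)
    (ε : ℝ) (hε : 0 < ε) :
    ∃ p : Fin n → MvPolynomial (Fin n) ℝ,
      (∀ x ∈ K, (show EuclideanSpace ℝ (Fin n) from WithLp.toLp 2 (fun i => MvPolynomial.eval x (p i))) ∉ A) ∧
      ∀ x ∈ K,
        ‖f x - (show EuclideanSpace ℝ (Fin n) from WithLp.toLp 2 (fun i => MvPolynomial.eval x (p i)))‖ < ε := by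
  obtain ⟨p, hp⟩ := exists_evalEuclidean_near_of_continuousOn hK hf (half_pos hε)
  have hKmeagre : IsMeagre K := (hK.isClosed.isNowhereDense_iff.2 hKi).isMeagre
  have himage : IsMeagre (evalEuclidean p '' K) :=
    (contDiff_evalEuclidean p).isMeagre_image hK.isSigmaCompact hKmeagre
  obtain ⟨c, hc, hcA⟩ := exists_mem_forall_add_notMem_of_isMeagre himage hA Metric.isOpen_ball
    ⟨0, Metric.mem_ball_self (half_pos hε)⟩
  refine ⟨fun i => p i + C (c i), fun x hx => ?_, fun x hx => ?_⟩
  · change evalEuclidean _ x ∉ A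
    rw [evalEuclidean_add_C]
    exact hcA _ (mem_image_of_mem _ hx)
  · change ‖f x - evalEuclidean _ x‖ < ε
    rw [evalEuclidean_add_C, ← sub_sub]
    calc ‖f x - evalEuclidean p x - c‖ ≤ ‖f x - evalEuclidean p x‖ + ‖c‖ := norm_sub_le _ _
      _ < ε / 2 + ε / 2 := add_lt_add (hp x hx) (mem_ball_zero_iff.1 hc)
      _ = ε := add_halves ε
end

section
/- Let B be an infinite-dimensional real Banach space, A ⊆ B countable, K ⊆ B compact, and f : K → B continuous. Then for every ε > 0 there exists a continuous polynomial mapping p : B → B such that p(x) ∉ A for all x ∈ K and sup_{x ∈ K} ‖f(x) − p(x)‖ < ε. -/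
/-- A continuous polynomial map between real normed spaces: a finite sum of continuous
homogeneous polynomials (continuous multilinear maps evaluated on the diagonal). -/
def IsContPolynomialMap {B : Type*} [NormedAddCommGroup B] [NormedSpace ℝ B]
    (p : B → B) : Prop :=
  ∃ (N : ℕ) (M : ∀ k : Fin (N + 1), ContinuousMultilinearMap ℝ (fun _ : Fin (k : ℕ) => B) B),
    ∀ x : B, p x = ∑ k : Fin (N + 1), M k (fun _ => x)

section Aux

variable {B : Type*} [NormedAddCommGroup B] [NormedSpace ℝ B]
variable {E : Type*} [NormedAddCommGroup E] [NormedSpace ℝ E]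

/-- Auxiliary: polynomial map of degree at most `N`, with `ℕ`-indexed data. -/
def PolyLe (N : ℕ) (p : B → E) : Prop :=
  ∃ M : ∀ k : ℕ, ContinuousMultilinearMap ℝ (fun _ : Fin k => B) E,
    ∀ x, p x = ∑ k ∈ Finset.range (N + 1), M k (fun _ => x)

lemma PolyLe.mono {N N' : ℕ} {p : B → E} (h : PolyLe N p) (hN : N ≤ N') : PolyLe N' p := by
  obtain ⟨M, hM⟩ := h
  refine ⟨fun k => if k ≤ N then M k else 0, fun x => ?_⟩
  rw [hM x, ← Finset.sum_subset (Finset.range_subset_range.2 (by omega : N + 1 ≤ N' + 1))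
      (fun k _ hk' => ?_)]
  · refine Finset.sum_congr rfl fun k hk => ?_
    rw [Finset.mem_range, Nat.lt_succ_iff] at hk
    simp [hk]
  · have hk2 : ¬ k ≤ N := by simpa [Finset.mem_range, Nat.lt_succ_iff, not_le] using hk'
    simp [hk2]

lemma PolyLe.add {N : ℕ} {p q : B → E} (hp : PolyLe N p) (hq : PolyLe N q) :
    PolyLe N (fun x => p x + q x) := by
  obtain ⟨M, hM⟩ := hp
  obtain ⟨M', hM'⟩ := hq
  exact ⟨fun k => M k + M' k, fun x => by
    simp [hM x, hM' x, Finset.sum_add_distrib]⟩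

lemma polyLe_const (c : E) : PolyLe (B := B) 0 (fun _ => c) := by
  refine ⟨fun k => match k with
    | 0 => ContinuousMultilinearMap.constOfIsEmpty ℝ (fun _ : Fin 0 => B) c
    | _+1 => 0, fun x => ?_⟩
  simp

lemma PolyLe.smul {N : ℕ} {p : B → E} (hp : PolyLe N p) (r : ℝ) :
    PolyLe N (fun x => r • p x) := by
  obtain ⟨M, hM⟩ := hp
  exact ⟨fun k => r • M k, fun x => by simp [hM x, Finset.smul_sum]⟩

lemma PolyLe.smulRight {N : ℕ} {q : B → ℝ} (hq : PolyLe N q) (b : E) :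
    PolyLe N (fun x => q x • b) := by
  obtain ⟨M, hM⟩ := hq
  exact ⟨fun k => (M k).smulRight b, fun x => by simp [hM x, Finset.sum_smul]⟩

lemma polyLe_monomial (k : ℕ) (φ : Fin k → (B →L[ℝ] ℝ)) :
    PolyLe k (fun x => ∏ j, φ j x) := by
  refine ⟨fun m => if h : m = k then
      (ContinuousMultilinearMap.mkPiAlgebra ℝ (Fin m) ℝ).compContinuousLinearMap
        (fun j => φ (Fin.cast h j)) else 0, fun x => ?_⟩
  rw [Finset.sum_eq_single_of_mem k (Finset.self_mem_range_succ k)]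
  · simp
  · intro m _ hmk
    simp [hmk]

lemma PolyLe.continuous {N : ℕ} {p : B → E} (hp : PolyLe N p) : Continuous p := by
  obtain ⟨M, hM⟩ := hp
  have h : Continuous fun x : B => ∑ k ∈ Finset.range (N + 1), M k (fun _ => x) :=
    continuous_finset_sum _ fun k _ =>
      (M k).cont.comp (continuous_pi fun _ => continuous_id)
  exact (funext hM : p = _) ▸ h

lemma polyLe_exists_sum {ι : Type*} [DecidableEq ι] (s : Finset ι) (p : ι → B → E) :
    (∀ i ∈ s, ∃ N, PolyLe N (p i)) → ∃ N, PolyLe N (fun x => ∑ i ∈ s, p i x) := by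
  induction s using Finset.induction with
  | empty => exact fun _ => ⟨0, by simpa using polyLe_const (0 : E)⟩
  | @insert a s ha ih =>
    intro h
    obtain ⟨N₁, h₁⟩ := h a (Finset.mem_insert_self a s)
    obtain ⟨N₂, h₂⟩ := ih fun i hi => h i (Finset.mem_insert_of_mem hi)
    refine ⟨max N₁ N₂, ?_⟩
    have := (h₁.mono (le_max_left N₁ N₂)).add (h₂.mono (le_max_right N₁ N₂))
    simpa [Finset.sum_insert ha] using this

variable (B) in
/-- Monomial scalar functions: finite products of continuous linear functionals. -/
def MonSet : Set (B → ℝ) :=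
  {q | ∃ (k : ℕ) (φ : Fin k → (B →L[ℝ] ℝ)), q = fun x => ∏ j, φ j x}

lemma monSet_mul {q q' : B → ℝ} (h : q ∈ MonSet B) (h' : q' ∈ MonSet B) :
    q * q' ∈ MonSet B := by
  obtain ⟨k, φ, rfl⟩ := h
  obtain ⟨l, ψ, rfl⟩ := h'
  refine ⟨k + l, Fin.append φ ψ, ?_⟩
  funext x
  simp [Fin.prod_univ_add]

lemma span_mon_mul {q q' : B → ℝ} (h : q ∈ Submodule.span ℝ (MonSet B))
    (h' : q' ∈ Submodule.span ℝ (MonSet B)) :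
    q * q' ∈ Submodule.span ℝ (MonSet B) := by
  induction h using Submodule.span_induction with
  | mem a ha =>
    induction h' using Submodule.span_induction with
    | mem b hb => exact Submodule.subset_span (monSet_mul ha hb)
    | zero => rw [mul_zero]; exact Submodule.zero_mem _
    | add x y hx hy ihx ihy => rw [mul_add]; exact Submodule.add_mem _ ihx ihy
    | smul r x hx ihx => rw [mul_smul_comm]; exact Submodule.smul_mem _ _ ihx
  | zero => rw [zero_mul]; exact Submodule.zero_mem _
  | add x y hx hy ihx ihy => rw [add_mul]; exact Submodule.add_mem _ ihx ihy
  | smul r x hx ihx => rw [smul_mul_assoc]; exact Submodule.smul_mem _ _ ihx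

lemma span_mon_polyLe {q : B → ℝ} (h : q ∈ Submodule.span ℝ (MonSet B)) :
    ∃ N, PolyLe N q := by
  induction h using Submodule.span_induction with
  | mem a ha =>
    obtain ⟨k, φ, rfl⟩ := ha
    exact ⟨k, polyLe_monomial k φ⟩
  | zero => exact ⟨0, polyLe_const (0 : ℝ)⟩
  | add x y hx hy ihx ihy =>
    obtain ⟨N₁, h₁⟩ := ihx
    obtain ⟨N₂, h₂⟩ := ihy
    exact ⟨max N₁ N₂, (h₁.mono (le_max_left N₁ N₂)).add (h₂.mono (le_max_right N₁ N₂))⟩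
  | smul r x hx ihx =>
    obtain ⟨N, hN⟩ := ihx
    exact ⟨N, hN.smul r⟩

lemma compact_interior_empty (hB : ¬ FiniteDimensional ℝ B) {S : Set B} (hS : IsCompact S) :
    interior S = ∅ := by
  by_contra h
  obtain ⟨z, hz⟩ := Set.nonempty_iff_ne_empty.mpr h
  obtain ⟨r, hr, hball⟩ := Metric.mem_nhds_iff.mp (mem_interior_iff_mem_nhds.mp hz)
  have hsub : Metric.closedBall z (r / 2) ⊆ S :=
    (Metric.closedBall_subset_ball (by linarith)).trans hball
  exact hB (FiniteDimensional.of_isCompact_closedBall ℝ (by linarith : (0:ℝ) < r / 2)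
    (hS.of_isClosed_subset Metric.isClosed_closedBall hsub))

lemma polyLe_isCPM {p : B → B} {N : ℕ} (h : PolyLe N p) : IsContPolynomialMap p := by
  obtain ⟨M, hM⟩ := h
  refine ⟨N, fun k => M k, fun x => ?_⟩
  rw [hM x]
  exact (Fin.sum_univ_eq_sum_range (fun k => M k (fun _ => x)) (N + 1)).symm

end Aux

theorem banach_weierstrass_avoids_countable
    {B : Type*} [NormedAddCommGroup B] [NormedSpace ℝ B] [CompleteSpace B]
    (hB : ¬ FiniteDimensional ℝ B)
    (A : Set B) (hA : A.Countable)
    (K : Set B) (hK : IsCompact K)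
    (f : B → B) (hf : ContinuousOn f K) (ε : ℝ) (hε : 0 < ε) :
    ∃ p : B → B, IsContPolynomialMap p ∧ (∀ x ∈ K, p x ∉ A) ∧ ∀ x ∈ K, ‖f x - p x‖ < ε := by
  classical
  rcases K.eq_empty_or_nonempty with rfl | hKne
  · exact ⟨fun _ => 0, polyLe_isCPM (polyLe_const 0), by simp, by simp⟩
  haveI : CompactSpace K := isCompact_iff_compactSpace.mp hK
  set ε4 := ε / 4 with hε4
  have hε4pos : 0 < ε4 := by positivity
  obtain ⟨δ, hδpos, hδ⟩ := Metric.uniformContinuousOn_iff.mp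
    (hK.uniformContinuousOn_of_continuous hf) ε4 hε4pos
  -- finite cover of K by balls of radius δ/2 centered in K
  obtain ⟨t, htK, htfin, htcov⟩ := hK.elim_finite_subcover_image
    (b := K) (c := fun c => Metric.ball c (δ / 2)) (fun _ _ => Metric.isOpen_ball)
    (fun x hx => Set.mem_biUnion hx (Metric.mem_ball_self (by linarith)))
  set s : Finset B := htfin.toFinset with hs
  have hmem : ∀ c, c ∈ s ↔ c ∈ t := fun c => htfin.mem_toFinset
  -- partition of unity
  set ψ : B → B → ℝ := fun c x => max (δ / 2 - ‖x - c‖) 0 with hψdef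
  have hψcont : ∀ c, Continuous (ψ c) := fun c =>
    (continuous_const.sub ((continuous_id.sub continuous_const).norm)).max continuous_const
  have hψnn : ∀ c x, 0 ≤ ψ c x := fun c x => le_max_right _ _
  set σ : B → ℝ := fun x => ∑ c ∈ s, ψ c x with hσdef
  have hσcont : Continuous σ := continuous_finset_sum _ fun c _ => hψcont c
  have hσpos : ∀ x ∈ K, 0 < σ x := by
    intro x hx
    obtain ⟨c, hcmem, hcball⟩ := Set.mem_iUnion₂.mp (htcov hx)
    have hxc : ‖x - c‖ < δ / 2 := by
      rw [← dist_eq_norm]; exact hcball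
    refine Finset.sum_pos' (fun c _ => hψnn c x) ⟨c, (hmem c).mpr hcmem, ?_⟩
    exact lt_max_iff.mpr (Or.inl (by linarith))
  set φ : B → B → ℝ := fun c x => ψ c x / σ x with hφdef
  have hφnn : ∀ c, ∀ x ∈ K, 0 ≤ φ c x := fun c x hx =>
    div_nonneg (hψnn c x) (hσpos x hx).le
  have hφsum : ∀ x ∈ K, ∑ c ∈ s, φ c x = 1 := by
    intro x hx
    rw [hφdef]
    simp only
    rw [← Finset.sum_div, div_self (hσpos x hx).ne']
  -- Stone-Weierstrass setup
  set G : Set C(K, ℝ) := {g | ∃ L : B →L[ℝ] ℝ, ∀ y : K, g y = L y} with hG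
  have hsep : (Algebra.adjoin ℝ G).SeparatesPoints := by
    intro x y hxy
    obtain ⟨L, hL⟩ := SeparatingDual.exists_separating_of_ne (R := ℝ)
      (fun h => hxy (Subtype.ext h))
    refine ⟨(⟨fun z : K => L z, L.continuous.comp continuous_subtype_val⟩ : C(K, ℝ)),
      ⟨_, Algebra.subset_adjoin ⟨L, fun _ => rfl⟩, rfl⟩, hL⟩
  have hextend : ∀ g ∈ Algebra.adjoin ℝ G, ∃ q : B → ℝ,
      q ∈ Submodule.span ℝ (MonSet B) ∧ ∀ y : K, g y = q y := by
    intro g hg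
    induction hg using Algebra.adjoin_induction with
    | mem a ha =>
      obtain ⟨L, hL⟩ := ha
      exact ⟨fun x => ∏ _j : Fin 1, L x,
        Submodule.subset_span ⟨1, fun _ => L, rfl⟩, fun y => by simp [hL y]⟩
    | algebraMap r =>
      refine ⟨r • fun x => ∏ _j : Fin 0, (0 : B →L[ℝ] ℝ) x,
        Submodule.smul_mem _ _ (Submodule.subset_span ⟨0, fun _ => 0, rfl⟩), fun y => by simp⟩
    | add x y hx hy ihx ihy =>
      obtain ⟨q₁, hq₁, he₁⟩ := ihx
      obtain ⟨q₂, hq₂, he₂⟩ := ihy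
      exact ⟨q₁ + q₂, Submodule.add_mem _ hq₁ hq₂, fun z => by
        simp [he₁ z, he₂ z]⟩
    | mul x y hx hy ihx ihy =>
      obtain ⟨q₁, hq₁, he₁⟩ := ihx
      obtain ⟨q₂, hq₂, he₂⟩ := ihy
      exact ⟨q₁ * q₂, span_mon_mul hq₁ hq₂, fun z => by
        simp [he₁ z, he₂ z]⟩
  -- choose polynomial approximations to the partition functions
  set Sf : ℝ := ∑ c ∈ s, ‖f c‖ with hSf
  have hSfnn : 0 ≤ Sf := Finset.sum_nonneg fun c _ => norm_nonneg _
  set η : ℝ := ε4 / (1 + Sf) with hη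
  have hηpos : 0 < η := div_pos hε4pos (by linarith)
  have happrox : ∀ c : B, ∃ q : B → ℝ, (∃ N, PolyLe N q) ∧ ∀ y : K, |φ c y - q y| < η := by
    intro c
    have hcont : Continuous fun y : K => φ c y :=
      (((hψcont c).comp continuous_subtype_val).div (hσcont.comp continuous_subtype_val)
        (fun y => (hσpos y y.2).ne'))
    obtain ⟨g, hgapp⟩ := ContinuousMap.exists_mem_subalgebra_near_continuous_of_separatesPoints
      (Algebra.adjoin ℝ G) hsep (fun y : K => φ c y) hcont η hηpos
    obtain ⟨q, hqspan, hqeq⟩ := hextend (g : C(K, ℝ)) g.2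
    refine ⟨q, span_mon_polyLe hqspan, fun y => ?_⟩
    have h2 := hgapp y
    rw [Real.norm_eq_abs] at h2
    have h3 : ((g : C(K, ℝ)) : K → ℝ) y = q y := hqeq y
    rw [h3, abs_sub_comm] at h2
    exact h2
  choose q hqpoly hqapp using happrox
  -- the polynomial approximation (before the avoidance perturbation)
  set p₀ : B → B := fun x => ∑ c ∈ s, q c x • f c with hp₀def
  obtain ⟨N₀, hN₀⟩ : ∃ N, PolyLe N p₀ :=
    polyLe_exists_sum s (fun c x => q c x • f c) fun c _ => by
      obtain ⟨N, hN⟩ := hqpoly c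
      exact ⟨N, hN.smulRight (f c)⟩
  have hp₀cont : Continuous p₀ := hN₀.continuous
  -- approximation estimate: ‖f x - p₀ x‖ < ε/2 on K
  have hfp₀ : ∀ x ∈ K, ‖f x - p₀ x‖ < ε / 2 := by
    intro x hx
    set g : B := ∑ c ∈ s, φ c x • f c with hgdef
    have h1 : ‖f x - g‖ ≤ ε4 := by
      have hfx : f x = ∑ c ∈ s, φ c x • f x := by
        rw [← Finset.sum_smul, hφsum x hx, one_smul]
      have hdiff : f x - g = ∑ c ∈ s, φ c x • (f x - f c) := by
        rw [hgdef]
        conv_lhs => rw [hfx]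
        rw [← Finset.sum_sub_distrib]
        exact Finset.sum_congr rfl fun c _ => (smul_sub _ _ _).symm
      rw [hdiff]
      refine (norm_sum_le _ _).trans ?_
      have hbound : ∀ c ∈ s, ‖φ c x • (f x - f c)‖ ≤ φ c x * ε4 := by
        intro c hc
        rw [norm_smul, Real.norm_eq_abs, abs_of_nonneg (hφnn c x hx)]
        rcases eq_or_lt_of_le (hφnn c x hx) with h0 | h0
        · rw [← h0]; simp
        · refine mul_le_mul_of_nonneg_left ?_ (hφnn c x hx)
          have hψpos : 0 < ψ c x := by
            by_contra hcon
            push_neg at hcon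
            have : φ c x = 0 := by
              rw [hφdef]
              simp only
              rw [le_antisymm hcon (hψnn c x), zero_div]
            exact absurd this (by linarith)
          have hlt : ‖x - c‖ < δ / 2 := by
            by_contra hcon
            push_neg at hcon
            have : ψ c x = 0 := max_eq_right (by linarith)
            linarith
          have hcK : c ∈ K := htK ((hmem c).mp hc)
          have := hδ x hx c hcK (by rw [dist_eq_norm]; linarith)
          rw [dist_eq_norm] at this
          exact this.le
      refine (Finset.sum_le_sum hbound).trans ?_
      rw [← Finset.sum_mul, hφsum x hx, one_mul]
    have h2 : ‖g - p₀ x‖ < ε4 := by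
      have hdiff : g - p₀ x = ∑ c ∈ s, (φ c x - q c x) • f c := by
        rw [hgdef, hp₀def]
        simp only
        rw [← Finset.sum_sub_distrib]
        exact Finset.sum_congr rfl fun c _ => (sub_smul _ _ _).symm
      rw [hdiff]
      calc ‖∑ c ∈ s, (φ c x - q c x) • f c‖
          ≤ ∑ c ∈ s, |φ c x - q c x| * ‖f c‖ := by
            refine (norm_sum_le _ _).trans (Finset.sum_le_sum fun c _ => ?_)
            rw [norm_smul, Real.norm_eq_abs]
        _ ≤ ∑ c ∈ s, η * ‖f c‖ :=
            Finset.sum_le_sum fun c _ =>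
              mul_le_mul_of_nonneg_right (hqapp c ⟨x, hx⟩).le (norm_nonneg _)
        _ = η * Sf := by rw [← Finset.mul_sum]
        _ < η * (1 + Sf) := by
            exact mul_lt_mul_of_pos_left (by linarith) hηpos
        _ = ε4 := by
            rw [hη, div_mul_cancel₀]
            linarith
    have : ‖f x - p₀ x‖ ≤ ‖f x - g‖ + ‖g - p₀ x‖ := by
      have : f x - p₀ x = (f x - g) + (g - p₀ x) := by abel
      rw [this]; exact norm_add_le _ _
    rw [hε4] at h1 h2
    linarith
  -- avoidance: perturb by a small vector outside a meagre set
  obtain ⟨a, ha⟩ := (hA.insert 0).exists_eq_range (Set.insert_nonempty _ _)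
  set T : Set B := ⋃ n : ℕ, (fun x => a n - p₀ x) '' K with hT
  have hTm : IsMeagre T := by
    refine isMeagre_iUnion fun n => ?_
    have hc : IsCompact ((fun x => a n - p₀ x) '' K) :=
      hK.image (continuous_const.sub hp₀cont)
    have hint := compact_interior_empty hB hc
    rw [IsMeagre]
    exact residual_of_dense_open hc.isClosed.isOpen_compl
      (interior_eq_empty_iff_dense_compl.mp hint)
  have hdense : Dense Tᶜ := dense_of_mem_residual hTm
  obtain ⟨v, hvT, hvball⟩ := hdense.exists_mem_open Metric.isOpen_ball
    ⟨0, Metric.mem_ball_self (by linarith : (0:ℝ) < ε / 2)⟩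
  have hvnorm : ‖v‖ < ε / 2 := by
    rw [Metric.mem_ball, dist_zero_right] at hvball
    exact hvball
  refine ⟨fun x => p₀ x + v, polyLe_isCPM
    (hN₀.add ((polyLe_const v).mono (Nat.zero_le N₀))), ?_, ?_⟩
  · intro x hx hmemA
    have : p₀ x + v ∈ insert (0 : B) A := Set.mem_insert_iff.mpr (Or.inr hmemA)
    rw [ha] at this
    obtain ⟨n, hn⟩ := this
    have : v ∈ T := Set.mem_iUnion.mpr ⟨n, ⟨x, hx, show a n - p₀ x = v by rw [hn]; abel⟩⟩
    exact hvT this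
  · intro x hx
    have h1 := hfp₀ x hx
    have : f x - (p₀ x + v) = (f x - p₀ x) - v := by abel
    rw [this]
    calc ‖f x - p₀ x - v‖ ≤ ‖f x - p₀ x‖ + ‖v‖ := norm_sub_le _ _
      _ < ε / 2 + ε / 2 := by linarith
      _ = ε := by ring
end
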